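/- There exist continuous functions f, g, h : S¹ → [0,1] such that: f² + g² + h² = f; gh = 0; f(1) = 1; g(1) = h(1) = 0; the functions x ↦ f(e^{2πix}), x ↦ g(e^{2πix}), x ↦ h(e^{2πix}) on [0,1] are Lipschitz; x ↦ f(e^{2πix}) is continuously differentiable on [0,1]; f(−1) = 0; h(e^{2πix}) = 0 for all x ∈ [0,1/2]; and h(e^{2πix})² = f(e^{2πix}) − f(e^{2πix})² for all x ∈ [1/2,1]. -/

import Mathlib

/-!
Take `f = (1 + Re z)/2`, `g = (Im z / 2)⁺` and `h = (Im z / 2)⁻`. On the circle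
`(1 + Re z)² + (Im z)² = 2 (1 + Re z)`, and since `a⁺ a⁻ = 0` we have `(a⁺)² + (a⁻)² = a²`;
together these give `f² + g² + h² = f`. Along `x ↦ e^{2πix}` the imaginary part is `sin 2πx`,
which is `≥ 0` on `[0, 1/2]` (so `h = 0` there) and `≤ 0` on `[1/2, 1]` (so `g = 0` there, and the
identity becomes `h² = f - f²`). The Lipschitz bounds come from composing the `1`-Lipschitz maps
`id`, `(·)⁺`, `(·)⁻` with smooth functions of `x` on a compact interval.
-/

open Complex Real

open scoped NNReal

section PosNegPart

variable {α : Type*} [CommRing α] [LinearOrder α] [IsOrderedRing α]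

lemma posPart_mul_negPart_eq_zero (a : α) : a⁺ * a⁻ = 0 := by
  rcases le_total a 0 with ha | ha
  · rw [posPart_eq_zero.2 ha, zero_mul]
  · rw [negPart_eq_zero.2 ha, mul_zero]

lemma posPart_sq_add_negPart_sq (a : α) : a⁺ ^ 2 + a⁻ ^ 2 = a ^ 2 := by
  nth_rewrite 3 [← posPart_sub_negPart a]
  linear_combination 2 * posPart_mul_negPart_eq_zero a

end PosNegPart

lemma ContDiffOn.exists_lipschitzOnWith_comp {E F G : Type*} [NormedAddCommGroup E]
    [NormedSpace ℝ E] [NormedAddCommGroup F] [NormedSpace ℝ F] [PseudoMetricSpace G]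
    {φ : F → G} {K : ℝ≥0} (hφ : LipschitzWith K φ) {u : E → F} {s : Set E}
    (hu : ContDiffOn ℝ 1 u s) (hs : Convex ℝ s) (hs' : IsCompact s) :
    ∃ K' : ℝ≥0, LipschitzOnWith K' (φ ∘ u) s := by
  obtain ⟨L, hL⟩ := hu.exists_lipschitzOnWith one_ne_zero hs hs'
  exact ⟨K * L, hφ.comp_lipschitzOnWith hL⟩

lemma exp_two_pi_mul_I_eq (x : ℝ) :
    Complex.exp (2 * π * I * x) = Complex.exp ((2 * π * x : ℝ) * I) := by
  push_cast
  ring_nf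

@[simp]
lemma re_exp_two_pi_mul_I (x : ℝ) : (Complex.exp (2 * π * I * x)).re = Real.cos (2 * π * x) := by
  rw [exp_two_pi_mul_I_eq, exp_ofReal_mul_I_re]

@[simp]
lemma im_exp_two_pi_mul_I (x : ℝ) : (Complex.exp (2 * π * I * x)).im = Real.sin (2 * π * x) := by
  rw [exp_two_pi_mul_I_eq, exp_ofReal_mul_I_im]

lemma norm_exp_two_pi_mul_I (x : ℝ) : ‖Complex.exp (2 * π * I * x)‖ = 1 := by
  rw [exp_two_pi_mul_I_eq, norm_exp_ofReal_mul_I]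

lemma sin_two_pi_mul_nonneg {x : ℝ} (hx : x ∈ Set.Icc (0 : ℝ) (1 / 2)) :
    0 ≤ Real.sin (2 * π * x) := by
  obtain ⟨h0, h1⟩ := hx
  apply sin_nonneg_of_nonneg_of_le_pi <;> nlinarith [pi_pos]

lemma sin_two_pi_mul_nonpos {x : ℝ} (hx : x ∈ Set.Icc (1 / 2 : ℝ) 1) :
    Real.sin (2 * π * x) ≤ 0 := by
  obtain ⟨h0, h1⟩ := hx
  have : 0 ≤ Real.sin (2 * π * x - π) := by
    apply sin_nonneg_of_nonneg_of_le_pi <;> nlinarith [pi_pos]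
  rw [Real.sin_sub_pi] at this
  linarith

namespace Loring

noncomputable def f (z : ℂ) : ℝ := (z.re + 1) / 2

noncomputable def g (z : ℂ) : ℝ := (z.im / 2)⁺

noncomputable def h (z : ℂ) : ℝ := (z.im / 2)⁻

lemma continuous_f : Continuous f := by unfold f; fun_prop

lemma continuous_g : Continuous g := by unfold g; fun_prop

lemma continuous_h : Continuous h := by unfold h; fun_prop

lemma re_sq_add_im_sq {z : ℂ} (hz : ‖z‖ = 1) : z.re ^ 2 + z.im ^ 2 = 1 := by
  have := Complex.sq_norm z
  rw [normSq_apply, hz] at this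
  linear_combination -this

lemma f_sq_add_g_sq_add_h_sq {z : ℂ} (hz : ‖z‖ = 1) : f z ^ 2 + g z ^ 2 + h z ^ 2 = f z := by
  unfold f g h
  linear_combination posPart_sq_add_negPart_sq (z.im / 2) + re_sq_add_im_sq hz / 4

lemma g_mul_h (z : ℂ) : g z * h z = 0 := posPart_mul_negPart_eq_zero _

lemma mem_Icc_of_norm_eq_one {z : ℂ} (hz : ‖z‖ = 1) :
    f z ∈ Set.Icc (0 : ℝ) 1 ∧ g z ∈ Set.Icc (0 : ℝ) 1 ∧ h z ∈ Set.Icc (0 : ℝ) 1 := by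
  have hre := abs_le.1 (hz ▸ abs_re_le_norm z)
  have him := abs_le.1 (hz ▸ abs_im_le_norm z)
  unfold f g h
  refine ⟨⟨by linarith, by linarith⟩, ⟨posPart_nonneg _, ?_⟩, ⟨negPart_nonneg _, ?_⟩⟩
  · exact max_le (by linarith) zero_le_one
  · exact max_le (by linarith) zero_le_one

lemma f_comp_exp (x : ℝ) : f (Complex.exp (2 * π * I * x)) = (Real.cos (2 * π * x) + 1) / 2 := by
  simp [f]

lemma contDiff_f_comp_exp : ContDiff ℝ 1 (fun x : ℝ => f (Complex.exp (2 * π * I * x))) := by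
  simp only [f_comp_exp]
  fun_prop

lemma h_exp_eq_zero {x : ℝ} (hx : x ∈ Set.Icc (0 : ℝ) (1 / 2)) :
    h (Complex.exp (2 * π * I * x)) = 0 := by
  have := sin_two_pi_mul_nonneg hx
  simp only [h, im_exp_two_pi_mul_I, negPart_eq_zero]
  positivity

lemma g_exp_eq_zero {x : ℝ} (hx : x ∈ Set.Icc (1 / 2 : ℝ) 1) :
    g (Complex.exp (2 * π * I * x)) = 0 := by
  have := sin_two_pi_mul_nonpos hx
  simp only [g, im_exp_two_pi_mul_I, posPart_eq_zero]
  linarith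

lemma h_exp_sq {x : ℝ} (hx : x ∈ Set.Icc (1 / 2 : ℝ) 1) :
    h (Complex.exp (2 * π * I * x)) ^ 2 =
      f (Complex.exp (2 * π * I * x)) - f (Complex.exp (2 * π * I * x)) ^ 2 := by
  linear_combination f_sq_add_g_sq_add_h_sq (norm_exp_two_pi_mul_I x) -
    g (Complex.exp (2 * π * I * x)) * g_exp_eq_zero hx

end Loring

theorem exists_loring_functions :
    ∃ f g h : ℂ → ℝ,
      ContinuousOn f (Metric.sphere (0 : ℂ) 1) ∧
      ContinuousOn g (Metric.sphere (0 : ℂ) 1) ∧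
      ContinuousOn h (Metric.sphere (0 : ℂ) 1) ∧
      (∀ z : ℂ, ‖z‖ = 1 →
        f z ∈ Set.Icc (0 : ℝ) 1 ∧ g z ∈ Set.Icc (0 : ℝ) 1 ∧ h z ∈ Set.Icc (0 : ℝ) 1) ∧
      (∀ z : ℂ, ‖z‖ = 1 → (f z) ^ 2 + (g z) ^ 2 + (h z) ^ 2 = f z) ∧
      (∀ z : ℂ, ‖z‖ = 1 → g z * h z = 0) ∧
      f 1 = 1 ∧ g 1 = 0 ∧ h 1 = 0 ∧
      (∃ K : NNReal,
        LipschitzOnWith K (fun x : ℝ => f (Complex.exp (2 * Real.pi * Complex.I * x)))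
          (Set.Icc (0 : ℝ) 1)) ∧
      (∃ K : NNReal,
        LipschitzOnWith K (fun x : ℝ => g (Complex.exp (2 * Real.pi * Complex.I * x)))
          (Set.Icc (0 : ℝ) 1)) ∧
      (∃ K : NNReal,
        LipschitzOnWith K (fun x : ℝ => h (Complex.exp (2 * Real.pi * Complex.I * x)))
          (Set.Icc (0 : ℝ) 1)) ∧
      ContDiffOn ℝ 1 (fun x : ℝ => f (Complex.exp (2 * Real.pi * Complex.I * x)))
        (Set.Icc (0 : ℝ) 1) ∧
      f (-1) = 0 ∧
      (∀ x : ℝ, x ∈ Set.Icc (0 : ℝ) (1 / 2) →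
        h (Complex.exp (2 * Real.pi * Complex.I * x)) = 0) ∧
      (∀ x : ℝ, x ∈ Set.Icc (1 / 2 : ℝ) 1 →
        (h (Complex.exp (2 * Real.pi * Complex.I * x))) ^ 2 =
          f (Complex.exp (2 * Real.pi * Complex.I * x)) -
            (f (Complex.exp (2 * Real.pi * Complex.I * x))) ^ 2) := by
  have lipschitz {φ : ℝ → ℝ} (hφ : LipschitzWith 1 φ) {u : ℝ → ℝ} (hu : ContDiff ℝ 1 u) :
      ∃ K : ℝ≥0, LipschitzOnWith K (φ ∘ u) (Set.Icc 0 1) :=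
    hu.contDiffOn.exists_lipschitzOnWith_comp hφ (convex_Icc 0 1) isCompact_Icc
  have contDiff_im : ContDiff ℝ 1 (fun x : ℝ => (Complex.exp (2 * π * I * x)).im / 2) := by
    simp only [im_exp_two_pi_mul_I]
    fun_prop
  refine ⟨Loring.f, Loring.g, Loring.h, Loring.continuous_f.continuousOn,
    Loring.continuous_g.continuousOn, Loring.continuous_h.continuousOn,
    fun z => Loring.mem_Icc_of_norm_eq_one, fun z => Loring.f_sq_add_g_sq_add_h_sq,
    fun z _ => Loring.g_mul_h z, by simp [Loring.f], by simp [Loring.g], by simp [Loring.h],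
    lipschitz LipschitzWith.id Loring.contDiff_f_comp_exp,
    lipschitz lipschitzWith_posPart contDiff_im, lipschitz lipschitzWith_negPart contDiff_im,
    Loring.contDiff_f_comp_exp.contDiffOn, by simp [Loring.f],
    fun x => Loring.h_exp_eq_zero, fun x => Loring.h_exp_sq⟩
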